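/- Let (U,V) be a hereditary cotorsion pair in Mod-A generated by a set, and assume it is weakly right periodic, i.e., every acyclic complex of injective A-modules has all cycle modules in V. Then for every n ≥ 0, every Gorenstein injective A-module M satisfies Ext_A^1(L, M) = 0 for every A-module L of U-projective dimension at most n. -/

import Mathlib

universe u

open CategoryTheory Limits

namespace OSG

variable (A : Type u) [Ring A]

/-- `Ext¹_A(M,N) = 0`: every short exact sequence `0 → N → E → M → 0` splits. -/
def Ext1Zero (M N : ModuleCat.{u} A) : Prop :=
  ∀ (E : ModuleCat.{u} A) (i : N ⟶ E) (p : E ⟶ M),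
    Function.Injective i → Function.Surjective p →
      LinearMap.range i.hom = LinearMap.ker p.hom → ∃ r : E ⟶ N, i ≫ r = 𝟙 N

/-- `Ext^{n+1}_A(M,N) = 0`, expressed by dimension shifting along projective resolutions. -/
def ExtZeroSucc (n : ℕ) (M N : ModuleCat.{u} A) : Prop :=
  ∀ P : ProjectiveResolution M, Ext1Zero A (cokernel (P.complex.d (n + 1) n)) N

def IsCotorsionPair (U V : Set (ModuleCat.{u} A)) : Prop :=
  U = {M | ∀ N ∈ V, Ext1Zero A M N} ∧ V = {N | ∀ M ∈ U, Ext1Zero A M N}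

/-- Every module has a special `U`-precover and a special `V`-preenvelope. -/
def IsCompletePair (U V : Set (ModuleCat.{u} A)) : Prop :=
  (∀ M : ModuleCat.{u} A, ∃ (K U₀ : ModuleCat.{u} A) (j : K ⟶ U₀) (p : U₀ ⟶ M),
      U₀ ∈ U ∧ K ∈ V ∧ Function.Injective j ∧ Function.Surjective p ∧
        LinearMap.range j.hom = LinearMap.ker p.hom) ∧
  (∀ M : ModuleCat.{u} A, ∃ (V₀ C : ModuleCat.{u} A) (ι : M ⟶ V₀) (q : V₀ ⟶ C),
      V₀ ∈ V ∧ C ∈ U ∧ Function.Injective ι ∧ Function.Surjective q ∧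
        LinearMap.range ι.hom = LinearMap.ker q.hom)

def IsHereditaryPair (U V : Set (ModuleCat.{u} A)) : Prop :=
  ∀ M ∈ U, ∀ N ∈ V, ∀ n : ℕ, ExtZeroSucc A n M N

def leftPerp (C : Set (ModuleCat.{u} A)) : Set (ModuleCat.{u} A) :=
  {M | ∀ N ∈ C, Ext1Zero A M N}

def rightPerp (C : Set (ModuleCat.{u} A)) : Set (ModuleCat.{u} A) :=
  {N | ∀ M ∈ C, Ext1Zero A M N}

def GeneratedBySet (V : Set (ModuleCat.{u} A)) : Prop :=
  ∃ S : Set (ModuleCat.{u} A), V = rightPerp A S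

/-- `M` has a resolution `0 → U_n → ⋯ → U_0 → M → 0` with all `U_i ∈ U`
(i.e. `U`-projective dimension at most `n`). -/
def ResLE (U : Set (ModuleCat.{u} A)) : ℕ → ModuleCat.{u} A → Prop
  | 0, M => M ∈ U
  | n + 1, M =>
    ResLE U n M ∨
      ∃ (K U₀ : ModuleCat.{u} A) (j : K ⟶ U₀) (p : U₀ ⟶ M),
        U₀ ∈ U ∧ Function.Injective j ∧ Function.Surjective p ∧
          LinearMap.range j.hom = LinearMap.ker p.hom ∧ ResLE U n K

/-- `M` has a coresolution `0 → M → V^0 → ⋯ → V^n → 0` with all `V^i ∈ V`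
(i.e. `V`-injective dimension at most `n`). -/
def CoresLE (V : Set (ModuleCat.{u} A)) : ℕ → ModuleCat.{u} A → Prop
  | 0, M => M ∈ V
  | n + 1, M =>
    CoresLE V n M ∨
      ∃ (V₀ C : ModuleCat.{u} A) (ι : M ⟶ V₀) (q : V₀ ⟶ C),
        V₀ ∈ V ∧ Function.Injective ι ∧ Function.Surjective q ∧
          LinearMap.range ι.hom = LinearMap.ker q.hom ∧ CoresLE V n C

/-- The `U`-projective dimension of `M`, as an extended natural number. -/
noncomputable def resDim (U : Set (ModuleCat.{u} A)) (M : ModuleCat.{u} A) : ℕ∞ :=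
  sInf {c : ℕ∞ | ∃ n : ℕ, c = n ∧ ResLE A U n M}

/-- The `V`-injective dimension of `M`, as an extended natural number. -/
noncomputable def coresDim (V : Set (ModuleCat.{u} A)) (M : ModuleCat.{u} A) : ℕ∞ :=
  sInf {c : ℕ∞ | ∃ n : ℕ, c = n ∧ CoresLE A V n M}

def prjClass : Set (ModuleCat.{u} A) := {M | Projective M}

def injClass : Set (ModuleCat.{u} A) := {M | Injective M}

section Complexes

/-- The complex `T` is acyclic (exact everywhere). -/
def Acyclic (T : ChainComplex (ModuleCat.{u} A) ℤ) : Prop := ∀ n : ℤ, T.ExactAt n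

/-- The complex `Hom_A(E, T)` is acyclic. -/
def HomIntoExact (E : ModuleCat.{u} A) (T : ChainComplex (ModuleCat.{u} A) ℤ) : Prop :=
  ∀ (n : ℤ) (f : E ⟶ T.X n), f ≫ T.d n (n - 1) = 0 →
    ∃ g : E ⟶ T.X (n + 1), g ≫ T.d (n + 1) n = f

/-- The complex `Hom_A(T, W)` is acyclic. -/
def HomFromExact (T : ChainComplex (ModuleCat.{u} A) ℤ) (W : ModuleCat.{u} A) : Prop :=
  ∀ (n : ℤ) (f : T.X n ⟶ W), T.d (n + 1) n ≫ f = 0 →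
    ∃ g : T.X (n - 1) ⟶ W, T.d n (n - 1) ≫ g = f

/-- `M` is a Gorenstein injective `A`-module. -/
def GorensteinInjective (M : ModuleCat.{u} A) : Prop :=
  ∃ T : ChainComplex (ModuleCat.{u} A) ℤ,
    (∀ n, Injective (T.X n)) ∧ Acyclic A T ∧
      (∀ E : ModuleCat.{u} A, Injective E → HomIntoExact A E T) ∧
      ∃ n : ℤ, Nonempty (M ≅ T.cycles n)

/-- `M` is a Gorenstein projective `A`-module. -/
def GorensteinProjective (M : ModuleCat.{u} A) : Prop :=
  ∃ T : ChainComplex (ModuleCat.{u} A) ℤ,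
    (∀ n, Projective (T.X n)) ∧ Acyclic A T ∧
      (∀ Q : ModuleCat.{u} A, Projective Q → HomFromExact A T Q) ∧
      ∃ n : ℤ, Nonempty (M ≅ T.cycles n)

end Complexes
section Tensor

/-- The balancing relations inside `N ⊗_ℤ M` for a right module `N` and a left module `M`. -/
def balRel (N : ModuleCat.{u} Aᵐᵒᵖ) (M : ModuleCat.{u} A) :
    Submodule ℤ (TensorProduct ℤ N M) :=
  Submodule.span ℤ
    {x | ∃ (n : N) (a : A) (m : M),
      x = (MulOpposite.op a • n) ⊗ₜ[ℤ] m - n ⊗ₜ[ℤ] (a • m)}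

/-- The tensor product `N ⊗_A M` of a right `A`-module and a left `A`-module. -/
def balTensor (N : ModuleCat.{u} Aᵐᵒᵖ) (M : ModuleCat.{u} A) : Type u :=
  TensorProduct ℤ N M ⧸ balRel A N M

noncomputable instance (N : ModuleCat.{u} Aᵐᵒᵖ) (M : ModuleCat.{u} A) :
    AddCommGroup (balTensor A N M) :=
  inferInstanceAs (AddCommGroup (TensorProduct ℤ N M ⧸ balRel A N M))

noncomputable instance (N : ModuleCat.{u} Aᵐᵒᵖ) (M : ModuleCat.{u} A) :
    Module ℤ (balTensor A N M) :=
  inferInstanceAs (Module ℤ (TensorProduct ℤ N M ⧸ balRel A N M))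

/-- The map `N ⊗_A M → N ⊗_A M'` induced by `f : M → M'`. -/
noncomputable def balMap (N : ModuleCat.{u} Aᵐᵒᵖ) {M M' : ModuleCat.{u} A} (f : M ⟶ M') :
    balTensor A N M →ₗ[ℤ] balTensor A N M' :=
  Submodule.mapQ (balRel A N M) (balRel A N M')
    (LinearMap.lTensor (R := ℤ) N f.hom.toAddMonoidHom.toIntLinearMap)
    (by
      unfold balRel
      rw [Submodule.span_le]
      rintro x ⟨n, a, m, rfl⟩
      have h : f.hom.toAddMonoidHom.toIntLinearMap (a • m) = a • f.hom.toAddMonoidHom.toIntLinearMap m :=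
        f.hom.map_smul a m
      have key : LinearMap.lTensor (R := ℤ) N f.hom.toAddMonoidHom.toIntLinearMap
          ((MulOpposite.op a • n) ⊗ₜ[ℤ] m - n ⊗ₜ[ℤ] (a • m)) =
          (MulOpposite.op a • n) ⊗ₜ[ℤ] f.hom.toAddMonoidHom.toIntLinearMap m -
            n ⊗ₜ[ℤ] (a • f.hom.toAddMonoidHom.toIntLinearMap m) := by
        rw [map_sub, LinearMap.lTensor_tmul, LinearMap.lTensor_tmul, h]
      refine Submodule.mem_comap.mpr ?_
      have hmem := (Submodule.subset_span ⟨n, a, f.hom.toAddMonoidHom.toIntLinearMap m, rfl⟩ :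
        (MulOpposite.op a • n) ⊗ₜ[ℤ] f.hom.toAddMonoidHom.toIntLinearMap m -
            n ⊗ₜ[ℤ] (a • f.hom.toAddMonoidHom.toIntLinearMap m) ∈ Submodule.span ℤ
          {x | ∃ (n : N) (a : A) (m : M'),
            x = (MulOpposite.op a • n) ⊗ₜ[ℤ] m - n ⊗ₜ[ℤ] (a • m)})
      rw [← key] at hmem
      exact hmem)

/-- The map `N ⊗_A M → N' ⊗_A M` induced by `g : N → N'`. -/
noncomputable def balMapR {N N' : ModuleCat.{u} Aᵐᵒᵖ} (g : N ⟶ N') (M : ModuleCat.{u} A) :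
    balTensor A N M →ₗ[ℤ] balTensor A N' M :=
  Submodule.mapQ (balRel A N M) (balRel A N' M)
    (LinearMap.rTensor (R := ℤ) M g.hom.toAddMonoidHom.toIntLinearMap)
    (by
      unfold balRel
      rw [Submodule.span_le]
      rintro x ⟨n, a, m, rfl⟩
      have h : g.hom.toAddMonoidHom.toIntLinearMap (MulOpposite.op a • n) =
          MulOpposite.op a • g.hom.toAddMonoidHom.toIntLinearMap n :=
        g.hom.map_smul (MulOpposite.op a) n
      have key : LinearMap.rTensor (R := ℤ) M g.hom.toAddMonoidHom.toIntLinearMap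
          ((MulOpposite.op a • n) ⊗ₜ[ℤ] m - n ⊗ₜ[ℤ] (a • m)) =
          (MulOpposite.op a • g.hom.toAddMonoidHom.toIntLinearMap n) ⊗ₜ[ℤ] m -
            g.hom.toAddMonoidHom.toIntLinearMap n ⊗ₜ[ℤ] (a • m) := by
        rw [map_sub, LinearMap.rTensor_tmul, LinearMap.rTensor_tmul, h]
      refine Submodule.mem_comap.mpr ?_
      have hmem := (Submodule.subset_span ⟨g.hom.toAddMonoidHom.toIntLinearMap n, a, m, rfl⟩ :
        (MulOpposite.op a • g.hom.toAddMonoidHom.toIntLinearMap n) ⊗ₜ[ℤ] m -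
            g.hom.toAddMonoidHom.toIntLinearMap n ⊗ₜ[ℤ] (a • m) ∈ Submodule.span ℤ
          {x | ∃ (n : N') (a : A) (m : M),
            x = (MulOpposite.op a • n) ⊗ₜ[ℤ] m - n ⊗ₜ[ℤ] (a • m)})
      rw [← key] at hmem
      exact hmem)

/-- A left `A`-module `M` is flat if `− ⊗_A M` preserves injections of right `A`-modules. -/
def FlatM (M : ModuleCat.{u} A) : Prop :=
  ∀ (N N' : ModuleCat.{u} Aᵐᵒᵖ) (g : N ⟶ N'), Function.Injective g →
    Function.Injective (balMapR A g M)

def flatClass : Set (ModuleCat.{u} A) := {M | FlatM A M}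

/-- `M` is cotorsion if `Ext¹_A(F,M) = 0` for every flat module `F`. -/
def cotClass : Set (ModuleCat.{u} A) := {M | ∀ F ∈ flatClass A, Ext1Zero A F M}

end Tensor
section Rest

variable (A : Type u) [Ring A]

/-- Exactness of `N ⊗_A T` at spot `n`. -/
def TensorExactAt (N : ModuleCat.{u} Aᵐᵒᵖ) (T : ChainComplex (ModuleCat.{u} A) ℤ)
    (n : ℤ) : Prop :=
  LinearMap.range (balMap A N (T.d (n + 1) n)) = LinearMap.ker (balMap A N (T.d n (n - 1)))

/-- `M` is a Gorenstein flat `A`-module. -/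
def GorensteinFlat (M : ModuleCat.{u} A) : Prop :=
  ∃ T : ChainComplex (ModuleCat.{u} A) ℤ,
    (∀ n, T.X n ∈ flatClass A) ∧ Acyclic A T ∧
      (∀ N : ModuleCat.{u} Aᵐᵒᵖ, Injective N → ∀ n : ℤ, TensorExactAt A N T n) ∧
      ∃ n : ℤ, Nonempty (M ≅ T.cycles n)

def gprjClass : Set (ModuleCat.{u} A) := {M | GorensteinProjective A M}
def ginjClass : Set (ModuleCat.{u} A) := {M | GorensteinInjective A M}
def gflatClass : Set (ModuleCat.{u} A) := {M | GorensteinFlat A M}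

/-- projective dimension -/
noncomputable def pdim (M : ModuleCat.{u} A) : ℕ∞ := resDim A (prjClass A) M
/-- injective dimension -/
noncomputable def idim (M : ModuleCat.{u} A) : ℕ∞ := coresDim A (injClass A) M
/-- flat dimension -/
noncomputable def fdim (M : ModuleCat.{u} A) : ℕ∞ := resDim A (flatClass A) M
/-- Gorenstein projective dimension -/
noncomputable def gpdim (M : ModuleCat.{u} A) : ℕ∞ := resDim A (gprjClass A) M
/-- Gorenstein injective dimension -/
noncomputable def gidim (M : ModuleCat.{u} A) : ℕ∞ := coresDim A (ginjClass A) M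
/-- Gorenstein flat dimension -/
noncomputable def gfdim (M : ModuleCat.{u} A) : ℕ∞ := resDim A (gflatClass A) M

noncomputable def spli : ℕ∞ := ⨆ (I : ModuleCat.{u} A) (_ : Injective I), pdim A I
noncomputable def silp : ℕ∞ := ⨆ (P : ModuleCat.{u} A) (_ : Projective P), idim A P
noncomputable def sfli : ℕ∞ := ⨆ (I : ModuleCat.{u} A) (_ : Injective I), fdim A I
noncomputable def splf : ℕ∞ := ⨆ (F : ModuleCat.{u} A) (_ : F ∈ flatClass A), pdim A F

noncomputable def FPD : ℕ∞ := ⨆ (M : ModuleCat.{u} A) (_ : pdim A M ≠ ⊤), pdim A M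
noncomputable def FID : ℕ∞ := ⨆ (M : ModuleCat.{u} A) (_ : idim A M ≠ ⊤), idim A M
noncomputable def FFD : ℕ∞ := ⨆ (M : ModuleCat.{u} A) (_ : fdim A M ≠ ⊤), fdim A M

/-- Gorenstein global dimension. -/
noncomputable def Ggldim : ℕ∞ := ⨆ (M : ModuleCat.{u} A), gpdim A M
/-- Gorenstein weak global dimension. -/
noncomputable def Gwgldim : ℕ∞ := ⨆ (M : ModuleCat.{u} A), gfdim A M

/-- sup of `U`-projective dimensions of injective modules. -/
noncomputable def relspli (U : Set (ModuleCat.{u} A)) : ℕ∞ :=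
  ⨆ (I : ModuleCat.{u} A) (_ : Injective I), resDim A U I
/-- sup of `V`-injective dimensions of projective modules. -/
noncomputable def relsilp (V : Set (ModuleCat.{u} A)) : ℕ∞ :=
  ⨆ (P : ModuleCat.{u} A) (_ : Projective P), coresDim A V P
/-- finitistic `U`-projective dimension. -/
noncomputable def relFPD (U : Set (ModuleCat.{u} A)) : ℕ∞ :=
  ⨆ (M : ModuleCat.{u} A) (_ : resDim A U M ≠ ⊤), resDim A U M
/-- finitistic `V`-injective dimension. -/
noncomputable def relFID (V : Set (ModuleCat.{u} A)) : ℕ∞ :=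
  ⨆ (M : ModuleCat.{u} A) (_ : coresDim A V M ≠ ⊤), coresDim A V M

/-- Every acyclic complex of injectives has cycles in `V`. -/
def WeaklyRightPeriodic (V : Set (ModuleCat.{u} A)) : Prop :=
  ∀ T : ChainComplex (ModuleCat.{u} A) ℤ,
    (∀ n, Injective (T.X n)) → Acyclic A T → ∀ n : ℤ, T.cycles n ∈ V

/-- Every acyclic complex of projectives has cycles in `U`. -/
def WeaklyLeftPeriodic (U : Set (ModuleCat.{u} A)) : Prop :=
  ∀ T : ChainComplex (ModuleCat.{u} A) ℤ,
    (∀ n, Projective (T.X n)) → Acyclic A T → ∀ n : ℤ, T.cycles n ∈ U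

/-- A right `U`-totally acyclic complex witnesses a right `U`-Gorenstein module. -/
def RightGorenstein (U V : Set (ModuleCat.{u} A)) : Set (ModuleCat.{u} A) :=
  {M | ∃ T : ChainComplex (ModuleCat.{u} A) ℤ,
    (∀ n, T.X n ∈ U) ∧ Acyclic A T ∧ (∀ n : ℤ, T.cycles n ∈ V) ∧
      (∀ W ∈ U ∩ V, HomFromExact A T W) ∧ Nonempty (M ≅ cokernel (T.d 1 0))}

/-- acyclic with all cycles in `V`. -/
def VAcyclicCx (V : Set (ModuleCat.{u} A)) (W : ChainComplex (ModuleCat.{u} A) ℤ) : Prop :=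
  Acyclic A W ∧ ∀ n : ℤ, W.cycles n ∈ V

/-- acyclic with all cycles in `U`. -/
def UAcyclicCx (U : Set (ModuleCat.{u} A)) (W : ChainComplex (ModuleCat.{u} A) ℤ) : Prop :=
  Acyclic A W ∧ ∀ n : ℤ, W.cycles n ∈ U

/-- A complex of modules in `U` is semi-`U` if every chain map to a `V`-acyclic
complex is null-homotopic (equivalently, `Hom(X,W)` is acyclic for `V`-acyclic `W`). -/
def SemiU (U V : Set (ModuleCat.{u} A)) (X : ChainComplex (ModuleCat.{u} A) ℤ) : Prop :=
  (∀ n, X.X n ∈ U) ∧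
    ∀ W : ChainComplex (ModuleCat.{u} A) ℤ, VAcyclicCx A V W →
      ∀ f : X ⟶ W, Nonempty (Homotopy f 0)

/-- A complex of modules in `V` is semi-`V` if every chain map from a `U`-acyclic
complex to it is null-homotopic. -/
def SemiV (U V : Set (ModuleCat.{u} A)) (Y : ChainComplex (ModuleCat.{u} A) ℤ) : Prop :=
  (∀ n, Y.X n ∈ V) ∧
    ∀ T : ChainComplex (ModuleCat.{u} A) ℤ, UAcyclicCx A U T →
      ∀ f : T ⟶ Y, Nonempty (Homotopy f 0)

/-- `W` is isomorphic to the module `M` in the derived category. -/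
def IsReplacementOf (W : ChainComplex (ModuleCat.{u} A) ℤ) (M : ModuleCat.{u} A) : Prop :=
  (∀ n : ℤ, n ≠ 0 → W.ExactAt n) ∧ Nonempty (W.homology 0 ≅ M)

/-- `RGor_U`-projective dimension of `M` is at most `n`: some semi-`U`-`V` replacement `W`
of `M` has `Coker(W_{n+1} → W_n)` right `U`-Gorenstein. -/
def RGorpdLE (U V : Set (ModuleCat.{u} A)) (n : ℕ) (M : ModuleCat.{u} A) : Prop :=
  ∃ W : ChainComplex (ModuleCat.{u} A) ℤ,
    SemiU A U V W ∧ SemiV A U V W ∧ IsReplacementOf A W M ∧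
      cokernel (W.d ((n : ℤ) + 1) (n : ℤ)) ∈ RightGorenstein A U V

/-- The `RGor_U`-projective dimension. -/
noncomputable def rgorDim (U V : Set (ModuleCat.{u} A)) (M : ModuleCat.{u} A) : ℕ∞ :=
  sInf {c : ℕ∞ | ∃ n : ℕ, c = n ∧ RGorpdLE A U V n M}

/-- The `RGor_U` relative Gorenstein global dimension. -/
noncomputable def rgorGldim (U V : Set (ModuleCat.{u} A)) : ℕ∞ :=
  ⨆ (M : ModuleCat.{u} A), rgorDim A U V M

/-- The Gorenstein flat-cotorsion dimension. -/
noncomputable def gfcDim (M : ModuleCat.{u} A) : ℕ∞ :=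
  rgorDim A (flatClass A) (cotClass A) M

/-- The Gorenstein flat-cotorsion global dimension. -/
noncomputable def Gfcgldim : ℕ∞ := rgorGldim A (flatClass A) (cotClass A)

/-- `A` is right weak coherent: products of flat left `A`-modules have finite
flat dimension. -/
def RightWeakCoherent : Prop :=
  ∀ (ι : Type u) (F : ι → ModuleCat.{u} A), (∀ i, F i ∈ flatClass A) →
    fdim A (ModuleCat.of A ((i : ι) → F i)) ≠ ⊤

/-- `A` is left `ℵ₀`-noetherian: every left ideal is countably generated. -/
def Aleph0Noetherian : Prop :=
  ∀ I : Ideal A, ∃ s : Set A, s.Countable ∧ Ideal.span s = I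

end Rest

/-!
`M` is a cycle module `Z_m` of an acyclic complex `T` of injectives, and by weak right
periodicity every cycle module `Z_k` of `T` lies in `V`, so `Ext¹(X, Z_k) = 0` for every `X ∈ U`.
The short exact sequences `0 → Z_{k+1} → T_{k+1} → Z_k → 0` have injective middle terms and
therefore shift dimension: for `0 → K → U₀ → L → 0` with `U₀ ∈ U`, the vanishing of
`Ext¹(K, Z_{k+1})` forces that of `Ext¹(L, Z_k)`. Induction on the length of a `U`-resolution
of `L`, simultaneously for all `k`, gives `Ext¹(L, Z_m) = 0`.
-/

variable {A}

structure IsShortExact {N E M : ModuleCat.{u} A} (i : N ⟶ E) (p : E ⟶ M) : Prop where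
  injective : Function.Injective i
  surjective : Function.Surjective p
  range_eq_ker : LinearMap.range i.hom = LinearMap.ker p.hom

namespace IsShortExact

variable {N E M : ModuleCat.{u} A} {i : N ⟶ E} {p : E ⟶ M}

lemma apply_apply_eq_zero (h : IsShortExact i p) (x : N) : p (i x) = 0 :=
  (h.range_eq_ker ▸ LinearMap.mem_range_self i.hom x : i x ∈ LinearMap.ker p.hom)

lemma comp_eq_zero (h : IsShortExact i p) : i ≫ p = 0 := by
  ext x
  exact h.apply_apply_eq_zero x

lemma shortExact (h : IsShortExact i p) : (ShortComplex.mk i p h.comp_eq_zero).ShortExact :=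
  .mk' ((ShortComplex.moduleCat_exact_iff_range_eq_ker _).2 h.range_eq_ker)
    ((ModuleCat.mono_iff_injective i).2 h.injective)
    ((ModuleCat.epi_iff_surjective p).2 h.surjective)

lemma of_shortExact {S : ShortComplex (ModuleCat.{u} A)} (hS : S.ShortExact) :
    IsShortExact S.f S.g where
  injective := (ModuleCat.mono_iff_injective S.f).1 hS.mono_f
  surjective := (ModuleCat.epi_iff_surjective S.g).1 hS.epi_g
  range_eq_ker := (ShortComplex.moduleCat_exact_iff_range_eq_ker S).1 hS.exact

lemma exists_section_iff_exists_retraction (h : IsShortExact i p) :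
    (∃ s : M ⟶ E, s ≫ p = 𝟙 M) ↔ ∃ r : E ⟶ N, i ≫ r = 𝟙 N := by
  have hS := h.shortExact
  constructor
  · rintro ⟨s, hs⟩
    exact ⟨_, (ShortComplex.Splitting.ofExactOfSection _ hS.exact s hs hS.mono_f).f_r⟩
  · rintro ⟨r, hr⟩
    exact ⟨_, (ShortComplex.Splitting.ofExactOfRetraction _ hS.exact r hr hS.epi_g).s_g⟩

end IsShortExact

lemma ext1Zero_iff_exists_section {M N : ModuleCat.{u} A} :
    Ext1Zero A M N ↔
      ∀ (E : ModuleCat.{u} A) (i : N ⟶ E) (p : E ⟶ M), IsShortExact i p →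
        ∃ s : M ⟶ E, s ≫ p = 𝟙 M :=
  ⟨fun H E i p h => h.exists_section_iff_exists_retraction.2 (H E i p h.1 h.2 h.3),
    fun H E i p hi hp hrk => (IsShortExact.mk hi hp hrk).exists_section_iff_exists_retraction.1
      (H E i p ⟨hi, hp, hrk⟩)⟩

lemma Ext1Zero.exists_lift {X N Y Z : ModuleCat.{u} A} (hX : Ext1Zero A X N) {i : N ⟶ Y}
    {g : Y ⟶ Z} (h : IsShortExact i g) (f : X ⟶ Z) : ∃ l : X ⟶ Y, l ≫ g = f := by
  -- `P` is the pullback `X ×_Z Y`; a section of its projection to `X` gives the lift.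
  let P := LinearMap.ker (f.hom ∘ₗ LinearMap.fst A X Y - g.hom ∘ₗ LinearMap.snd A X Y)
  have mem_P (v : X × Y) : v ∈ P ↔ f v.1 = g v.2 := sub_eq_zero
  let ι : N ⟶ ModuleCat.of A P := ModuleCat.ofHom <|
    LinearMap.codRestrict P (LinearMap.inr A X Y ∘ₗ i.hom) fun n =>
      (mem_P _).2 (by simp [h.apply_apply_eq_zero])
  let π : ModuleCat.of A P ⟶ X := ModuleCat.ofHom (LinearMap.fst A X Y ∘ₗ P.subtype)
  have hP : IsShortExact ι π := by
    refine ⟨fun a b hab => h.injective (congrArg (fun v : P => v.1.2) hab), fun x => ?_, ?_⟩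
    · obtain ⟨y, hy⟩ := h.surjective (f x)
      exact ⟨⟨(x, y), (mem_P _).2 hy.symm⟩, rfl⟩
    · ext ⟨⟨x, y⟩, hxy⟩
      simp only [LinearMap.mem_range, LinearMap.mem_ker]
      constructor
      · rintro ⟨n, hn⟩
        rw [← hn]
        rfl
      · intro (hx : x = 0)
        have hy : y ∈ LinearMap.ker g.hom := by
          simpa [hx] using ((mem_P _).1 hxy).symm
        obtain ⟨n, hn⟩ := h.range_eq_ker ▸ hy
        exact ⟨n, Subtype.ext (Prod.ext hx.symm hn)⟩
  obtain ⟨s, hs⟩ := ext1Zero_iff_exists_section.1 hX _ ι π hP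
  refine ⟨s ≫ ModuleCat.ofHom (LinearMap.snd A X Y ∘ₗ P.subtype), ?_⟩
  ext x
  have hx : π (s x) = x := ConcreteCategory.congr_hom hs x
  exact ((mem_P _).1 (s x).2).symm.trans (congrArg f hx)

lemma Ext1Zero.of_iso {L N N' : ModuleCat.{u} A} (h : Ext1Zero A L N) (e : N ≅ N') :
    Ext1Zero A L N' := by
  rw [ext1Zero_iff_exists_section] at h ⊢
  intro E i p hip
  refine h E (e.hom ≫ i) p
    ⟨hip.injective.comp ((ModuleCat.mono_iff_injective _).1 inferInstance), hip.surjective, ?_⟩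
  rw [ModuleCat.hom_comp, LinearMap.range_comp_of_range_eq_top _
    (LinearMap.range_eq_top.2 ((ModuleCat.epi_iff_surjective _).1 inferInstance)), hip.range_eq_ker]

lemma ext1Zero_of_isShortExact_of_injective {K U₀ L Z' I Z : ModuleCat.{u} A}
    {j : K ⟶ U₀} {q : U₀ ⟶ L} (hjq : IsShortExact j q)
    {ι : Z' ⟶ I} {d : I ⟶ Z} (hιd : IsShortExact ι d) [Injective I]
    (hU₀ : Ext1Zero A U₀ Z) (hK : Ext1Zero A K Z') : Ext1Zero A L Z := by
  rw [ext1Zero_iff_exists_section]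
  intro E i p hip
  have := hip.shortExact.mono_f
  have := hjq.shortExact.mono_f
  have := hjq.shortExact.epi_g
  -- Lift `q` to `σ : U₀ ⟶ E`. Its restriction to `K` lands in `Z`, lifts to `I`, and extends
  -- over `U₀` by injectivity of `I`; subtracting this extension from `σ` kills `K`.
  obtain ⟨σ, hσ⟩ := hU₀.exists_lift hip q
  let φ : K ⟶ Z := hip.shortExact.exact.lift (j ≫ σ) (by simp [hσ, hjq.comp_eq_zero])
  have hφ : φ ≫ i = j ≫ σ := hip.shortExact.exact.lift_f _ _
  obtain ⟨φ', hφ'⟩ := hK.exists_lift hιd φ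
  let g := Injective.factorThru φ' j
  let t := hjq.shortExact.exact.desc (σ - g ≫ d ≫ i) (by simp [g, reassoc_of% hφ', hφ])
  have ht : q ≫ t = σ - g ≫ d ≫ i := hjq.shortExact.exact.g_desc _ _
  refine ⟨t, ?_⟩
  rw [← cancel_epi q, reassoc_of% ht]
  simp [hσ, hip.comp_eq_zero]

lemma ext1Zero_of_resLE {U : Set (ModuleCat.{u} A)} {Z I : ℤ → ModuleCat.{u} A}
    (hI : ∀ k, Injective (I k)) {ι : ∀ k, Z (k + 1) ⟶ I k} {d : ∀ k, I k ⟶ Z k}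
    (hιd : ∀ k, IsShortExact (ι k) (d k)) (hU : ∀ X ∈ U, ∀ k, Ext1Zero A X (Z k))
    {n : ℕ} {L : ModuleCat.{u} A} (hL : ResLE A U n L) (k : ℤ) : Ext1Zero A L (Z k) := by
  induction n generalizing L k with
  | zero => exact hU L hL k
  | succ n ih =>
    rcases hL with hL | ⟨K, U₀, j, q, hU₀, hj, hq, hjq, hK⟩
    · exact ih hL k
    · have := hI k
      exact ext1Zero_of_isShortExact_of_injective ⟨hj, hq, hjq⟩ (hιd k) (hU U₀ hU₀ k)
        (ih hK (k + 1))

lemma isShortExact_iCycles_toCycles (T : ChainComplex (ModuleCat.{u} A) ℤ) {k : ℤ}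
    (hk : T.ExactAt k) : IsShortExact (T.iCycles (k + 1)) (T.toCycles (k + 1) k) := by
  have hzero : T.iCycles (k + 1) ≫ T.toCycles (k + 1) k = 0 := by
    simp [← cancel_mono (T.iCycles k)]
  have hker := isKernelOfComp _ _ (T.cyclesIsKernel (k + 1) k (by simp)) hzero
    (T.toCycles_i (k + 1) k)
  have hepi : Epi (T.toCycles (k + 1) k) := by
    have := ((T.exactAt_iff' (k + 1) k (k - 1) (by simp) (by simp)).1 hk).epi_toCycles
    rw [← T.toCycles_cyclesIsoSc'_hom (k + 1) k (k - 1) (by simp) (by simp)] at this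
    exact (epi_comp_iff_of_isIso _ _).1 this
  exact IsShortExact.of_shortExact (S := .mk _ _ hzero)
    (.mk' (ShortComplex.exact_of_f_is_kernel _ hker) inferInstance hepi)

theorem stmt_2_general (A : Type u) [Ring A] (U V : Set (ModuleCat.{u} A))
    (hpair : IsCotorsionPair A U V)
    (hwrp : WeaklyRightPeriodic A V)
    (n : ℕ) (M L : ModuleCat.{u} A)
    (hM : GorensteinInjective A M) (hL : ResLE A U n L) :
    Ext1Zero A L M := by
  obtain ⟨T, hinj, hac, -, m, ⟨e⟩⟩ := hM
  have hU (X) (hX : X ∈ U) (k : ℤ) : Ext1Zero A X (T.cycles k) :=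
    (hpair.1 ▸ hX : X ∈ {X | ∀ N ∈ V, Ext1Zero A X N}) _ (hwrp T hinj hac k)
  exact (ext1Zero_of_resLE (fun k => hinj (k + 1))
    (fun k => isShortExact_iCycles_toCycles T (hac k)) hU hL m).of_iso e.symm

/-- Gorenstein injective modules are right orthogonal to modules of finite
`U`-projective dimension when `(U,V)` is weakly right periodic. -/
theorem stmt_2 (A : Type u) [Ring A] (U V : Set (ModuleCat.{u} A))
    (hpair : IsCotorsionPair A U V) (hhered : IsHereditaryPair A U V)
    (hgen : GeneratedBySet A V) (hwrp : WeaklyRightPeriodic A V)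
    (n : ℕ) (M L : ModuleCat.{u} A)
    (hM : GorensteinInjective A M) (hL : ResLE A U n L) :
    Ext1Zero A L M :=
  stmt_2_general A U V hpair hwrp n M L hM hL

end OSG
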